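/- If two channel configurations (h_m) and (g_m) of M row vectors satisfy h_i h_jᴴ = g_i g_jᴴ for all i, j, and the WMMSE iterates are initialized with the same scalars (u_m⁰, w_m⁰), then the scalar iterates (u_mᵗ, w_mᵗ) produced by the WMMSE recursion coincide for the two configurations for all t. -/

import Mathlib

open Matrix
open scoped BigOperators

/-!
Write `H` for the matrix with rows `h_m`, `G = H Hᴴ` for its Gram matrix and `Λ = diag λ`, so that
the `v`-update inverts `A = σ²I + Hᴴ Λ H`. Since `A Hᴴ = Hᴴ K` with `K = σ²I + Λ G`, and `K` is
invertible together with `A` by the Weinstein–Aronszajn identity, the push-through identity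
`A⁻¹ Hᴴ = Hᴴ K⁻¹` gives `v_m = γ_m Hᴴ K⁻¹ e_m`. Hence the only quantities the `u`- and `w`-updates
read, `h_k v_m` and `‖v_m‖²`, are entries of `G K⁻¹` and `K⁻ᴴ G K⁻¹`: they depend on the channels
only through `G`, and induction on `t` finishes.
-/

/-- The matrix `σ²I + ∑ λ_m^{t} h_mᴴ h_m` appearing in the WMMSE `v`-update. -/
noncomputable def wmmseA {N M : ℕ} (σ2 PT : ℝ) (α : Fin M → ℝ) (h : Fin M → Fin N → ℂ)
    (u w : Fin M → ℂ) : Matrix (Fin N) (Fin N) ℂ :=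
  (σ2 : ℂ) • (1 : Matrix (Fin N) (Fin N) ℂ) +
    ∑ m, ((PT : ℂ) * (α m : ℂ) * u m * w m * star (u m) /
        ∑ n, (α n : ℂ) * u n * w n * star (u n)) •
      Matrix.vecMulVec (star (h m)) (h m)

/-- WMMSE `v`-update: `v_k = (σ²I + ∑ λ_m h_mᴴ h_m)⁻¹ h_kᴴ γ_k`. -/
noncomputable def wmmseV {N M : ℕ} (σ2 PT : ℝ) (α : Fin M → ℝ) (h : Fin M → Fin N → ℂ)
    (u w : Fin M → ℂ) : Fin M → Fin N → ℂ :=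
  fun k => (wmmseA σ2 PT α h u w)⁻¹.mulVec
    (((PT : ℂ) * (α k : ℂ) * u k * w k /
        ∑ n, (α n : ℂ) * u n * w n * star (u n)) • star (h k))

/-- WMMSE `u`-update. -/
noncomputable def wmmseU {N M : ℕ} (σ2 PT : ℝ) (h : Fin M → Fin N → ℂ)
    (v : Fin M → Fin N → ℂ) : Fin M → ℂ :=
  fun k => (((σ2 / PT : ℝ) : ℂ) * (∑ m, ∑ i, star (v m i) * v m i) +
      ∑ m, (∑ i, h k i * v m i) * star (∑ i, h k i * v m i))⁻¹ *
    ∑ i, h k i * v k i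

/-- WMMSE `w`-update. -/
noncomputable def wmmseW {N M : ℕ} (h : Fin M → Fin N → ℂ) (v : Fin M → Fin N → ℂ)
    (u : Fin M → ℂ) : Fin M → ℂ :=
  fun k => (1 - star (u k) * ∑ i, h k i * v k i)⁻¹

noncomputable def wmmseGamma {M : ℕ} (PT : ℝ) (α : Fin M → ℝ) (u w : Fin M → ℂ) : Fin M → ℂ :=
  fun m => (PT : ℂ) * (α m : ℂ) * u m * w m / ∑ n, (α n : ℂ) * u n * w n * star (u n)

noncomputable def wmmseLambda {M : ℕ} (PT : ℝ) (α : Fin M → ℝ) (u w : Fin M → ℂ) :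
    Matrix (Fin M) (Fin M) ℂ :=
  diagonal fun m => wmmseGamma PT α u w m * star (u m)

noncomputable def wmmseDual {M : ℕ} (σ2 PT : ℝ) (α : Fin M → ℝ) (u w : Fin M → ℂ)
    (G : Matrix (Fin M) (Fin M) ℂ) : Matrix (Fin M) (Fin M) ℂ :=
  (σ2 : ℂ) • 1 + wmmseLambda PT α u w * G

section

variable {m n R : Type*} [Fintype m] [Fintype n] [DecidableEq m] [DecidableEq n]

theorem Matrix.inv_mul_eq_mul_inv_of_mul_eq_mul [CommRing R] {A : Matrix m m R}
    {K : Matrix n n R} {X : Matrix m n R} (hA : IsUnit A) (hK : IsUnit K)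
    (hAX : A * X = X * K) : A⁻¹ * X = X * K⁻¹ := by
  rw [isUnit_iff_isUnit_det] at hA hK
  calc A⁻¹ * X = A⁻¹ * (X * K) * K⁻¹ := by
        rw [← Matrix.mul_assoc, mul_nonsing_inv_cancel_right _ _ hK]
    _ = X * K⁻¹ := by rw [← hAX, nonsing_inv_mul_cancel_left _ _ hA]

theorem Matrix.isUnit_smul_one_add_mul_comm [Field R] {c : R} (hc : c ≠ 0)
    (B : Matrix m n R) (C : Matrix n m R) :
    IsUnit (c • 1 + B * C) ↔ IsUnit (c • 1 + C * B) := by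
  have hBC : c • 1 + B * C = c • (1 + (c⁻¹ • B) * C) := by
    rw [smul_add, Matrix.smul_mul, smul_smul, mul_inv_cancel₀ hc, one_smul]
  have hCB : c • 1 + C * B = c • (1 + C * (c⁻¹ • B)) := by
    rw [smul_add, Matrix.mul_smul, smul_smul, mul_inv_cancel₀ hc, one_smul]
  rw [isUnit_iff_isUnit_det, isUnit_iff_isUnit_det, hBC, hCB, det_smul, det_smul,
    det_one_add_mul_comm]
  simp only [isUnit_iff_ne_zero, mul_ne_zero_iff, ne_eq, pow_eq_zero_iff', hc, false_and,
    not_false_eq_true, true_and]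

end

section Iteration

variable {N M : ℕ} (σ2 PT : ℝ) (α : Fin M → ℝ) (h : Fin M → Fin N → ℂ) (u w : Fin M → ℂ)

local notation "H" => Matrix.of h
local notation "Gram" => Matrix.of h * (Matrix.of h)ᴴ

theorem wmmseA_eq : wmmseA σ2 PT α h u w = (σ2 : ℂ) • 1 + Hᴴ * wmmseLambda PT α u w * H := by
  rw [wmmseA, Matrix.mul_assoc]
  congr 1
  ext i j
  simp only [Matrix.sum_apply, Matrix.smul_apply, vecMulVec_apply, smul_eq_mul, mul_apply,
    wmmseLambda, wmmseGamma, diagonal_apply, ite_mul, zero_mul, Finset.sum_ite_eq,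
    Finset.mem_univ, if_true, conjTranspose_apply, of_apply, Pi.star_apply]
  exact Finset.sum_congr rfl fun m _ => by ring

theorem wmmseA_mul_conjTranspose :
    wmmseA σ2 PT α h u w * Hᴴ = Hᴴ * wmmseDual σ2 PT α u w Gram := by
  rw [wmmseA_eq, wmmseDual, Matrix.add_mul, Matrix.mul_add, Matrix.smul_mul, Matrix.mul_smul,
    Matrix.one_mul, Matrix.mul_one]
  simp only [Matrix.mul_assoc]

variable {σ2 PT α h u w}

theorem isUnit_wmmseDual (hσ : σ2 ≠ 0) (hA : IsUnit (wmmseA σ2 PT α h u w)) :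
    IsUnit (wmmseDual σ2 PT α u w Gram) := by
  rw [wmmseA_eq, Matrix.mul_assoc,
    isUnit_smul_one_add_mul_comm (Complex.ofReal_ne_zero.mpr hσ)] at hA
  rwa [wmmseDual, ← Matrix.mul_assoc]

theorem wmmseV_apply (hσ : σ2 ≠ 0) (hA : IsUnit (wmmseA σ2 PT α h u w)) (m : Fin M)
    (i : Fin N) :
    wmmseV σ2 PT α h u w m i =
      wmmseGamma PT α u w m * (Hᴴ * (wmmseDual σ2 PT α u w Gram)⁻¹) i m := by
  rw [← inv_mul_eq_mul_inv_of_mul_eq_mul hA (isUnit_wmmseDual hσ hA)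
    (wmmseA_mul_conjTranspose σ2 PT α h u w)]
  simp only [wmmseV, wmmseGamma, mulVec, dotProduct, Pi.smul_apply, Pi.star_apply,
    smul_eq_mul, mul_apply, conjTranspose_apply, of_apply, Finset.mul_sum]
  exact Finset.sum_congr rfl fun j _ => by ring

theorem sum_mul_wmmseV (hσ : σ2 ≠ 0) (hA : IsUnit (wmmseA σ2 PT α h u w)) (k m : Fin M) :
    ∑ i, h k i * wmmseV σ2 PT α h u w m i =
      wmmseGamma PT α u w m * (Gram * (wmmseDual σ2 PT α u w Gram)⁻¹) k m := by
  simp only [wmmseV_apply hσ hA, Matrix.mul_assoc, mul_apply (M := H), of_apply, Finset.mul_sum]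
  exact Finset.sum_congr rfl fun i _ => by ring

theorem sum_star_wmmseV_mul_wmmseV (hσ : σ2 ≠ 0) (hA : IsUnit (wmmseA σ2 PT α h u w))
    (m : Fin M) :
    ∑ i, star (wmmseV σ2 PT α h u w m i) * wmmseV σ2 PT α h u w m i =
      star (wmmseGamma PT α u w m) * wmmseGamma PT α u w m *
        ((wmmseDual σ2 PT α u w Gram)⁻¹ᴴ * Gram * (wmmseDual σ2 PT α u w Gram)⁻¹) m m := by
  set K := (wmmseDual σ2 PT α u w Gram)⁻¹
  have hX : Kᴴ * Gram * K = (Hᴴ * K)ᴴ * (Hᴴ * K) := by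
    simp only [conjTranspose_mul, conjTranspose_conjTranspose, Matrix.mul_assoc]
  simp only [hX, wmmseV_apply hσ hA, mul_apply (M := (Hᴴ * K)ᴴ), conjTranspose_apply,
    star_mul', Finset.mul_sum]
  exact Finset.sum_congr rfl fun i _ => by ring

end Iteration

theorem wmmseU_congr {N M : ℕ} {σ2 PT : ℝ} {h g : Fin M → Fin N → ℂ} {v v' : Fin M → Fin N → ℂ}
    (hhv : ∀ k m, ∑ i, h k i * v m i = ∑ i, g k i * v' m i)
    (hvv : ∀ m, ∑ i, star (v m i) * v m i = ∑ i, star (v' m i) * v' m i) :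
    wmmseU σ2 PT h v = wmmseU σ2 PT g v' := by
  funext k
  simp only [wmmseU, hhv, hvv]

theorem wmmseW_congr {N M : ℕ} {h g : Fin M → Fin N → ℂ} {v v' : Fin M → Fin N → ℂ}
    (hhv : ∀ k, ∑ i, h k i * v k i = ∑ i, g k i * v' k i) (u : Fin M → ℂ) :
    wmmseW h v u = wmmseW g v' u := by
  funext k
  simp only [wmmseW, hhv]

theorem stmt8_general {N M : ℕ} (σ2 PT : ℝ) (hσ : 0 < σ2)
    (α : Fin M → ℝ)
    (h g : Fin M → Fin N → ℂ)
    (hGram : ∀ i j, ∑ t, h i t * star (h j t) = ∑ t, g i t * star (g j t))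
    (uh wh ug wg : ℕ → Fin M → ℂ)
    (h0 : uh 0 = ug 0) (h0' : wh 0 = wg 0)
    (hinvh : ∀ t, IsUnit (wmmseA σ2 PT α h (uh t) (wh t)))
    (hinvg : ∀ t, IsUnit (wmmseA σ2 PT α g (ug t) (wg t)))
    (huh : ∀ t, uh (t + 1) = wmmseU σ2 PT h (wmmseV σ2 PT α h (uh t) (wh t)))
    (hwh : ∀ t, wh (t + 1) = wmmseW h (wmmseV σ2 PT α h (uh t) (wh t)) (uh (t + 1)))
    (hug : ∀ t, ug (t + 1) = wmmseU σ2 PT g (wmmseV σ2 PT α g (ug t) (wg t)))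
    (hwg : ∀ t, wg (t + 1) = wmmseW g (wmmseV σ2 PT α g (ug t) (wg t)) (ug (t + 1))) :
    ∀ t, uh t = ug t ∧ wh t = wg t := by
  have hG : of h * (of h)ᴴ = of g * (of g)ᴴ := by
    ext i j
    simpa only [mul_apply, conjTranspose_apply, of_apply, mul_comm] using hGram i j
  intro t
  induction t with
  | zero => exact ⟨h0, h0'⟩
  | succ t ih =>
    obtain ⟨hu, hw⟩ := ih
    have hAh : IsUnit (wmmseA σ2 PT α h (ug t) (wg t)) := hu ▸ hw ▸ hinvh t
    have hhv (k m) := (sum_mul_wmmseV hσ.ne' hAh k m).trans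
      (hG ▸ sum_mul_wmmseV hσ.ne' (hinvg t) k m).symm
    have hvv (m) := (sum_star_wmmseV_mul_wmmseV hσ.ne' hAh m).trans
      (hG ▸ sum_star_wmmseV_mul_wmmseV hσ.ne' (hinvg t) m).symm
    have hu' : uh (t + 1) = ug (t + 1) := by rw [huh, hug, hu, hw, wmmseU_congr hhv hvv]
    exact ⟨hu', by rw [hwh, hwg, hu', hu, hw, wmmseW_congr (fun k => hhv k k)]⟩

/-- If two channel configurations have the same pairwise inner products
`h_i h_jᴴ = g_i g_jᴴ` and the WMMSE scalar iterates start from the same values,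
then the scalar iterates coincide for all iterations. -/
theorem stmt8 {N M : ℕ} (σ2 PT : ℝ) (hσ : 0 < σ2) (hPT : 0 < PT)
    (α : Fin M → ℝ) (hα : ∀ k, 0 < α k)
    (h g : Fin M → Fin N → ℂ)
    (hGram : ∀ i j, ∑ t, h i t * star (h j t) = ∑ t, g i t * star (g j t))
    (uh wh ug wg : ℕ → Fin M → ℂ)
    (h0 : uh 0 = ug 0) (h0' : wh 0 = wg 0)
    (hinvh : ∀ t, IsUnit (wmmseA σ2 PT α h (uh t) (wh t)))
    (hinvg : ∀ t, IsUnit (wmmseA σ2 PT α g (ug t) (wg t)))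
    (huh : ∀ t, uh (t + 1) = wmmseU σ2 PT h (wmmseV σ2 PT α h (uh t) (wh t)))
    (hwh : ∀ t, wh (t + 1) = wmmseW h (wmmseV σ2 PT α h (uh t) (wh t)) (uh (t + 1)))
    (hug : ∀ t, ug (t + 1) = wmmseU σ2 PT g (wmmseV σ2 PT α g (ug t) (wg t)))
    (hwg : ∀ t, wg (t + 1) = wmmseW g (wmmseV σ2 PT α g (ug t) (wg t)) (ug (t + 1))) :
    ∀ t, uh t = ug t ∧ wh t = wg t :=
  stmt8_general σ2 PT hσ α h g hGram uh wh ug wg h0 h0' hinvh hinvg huh hwh hug hwg
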